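/- In the concrete quasi-free CAR model: let l ∈ ℤ with λ_l ≠ 1/2 and let ξ ∈ H satisfy the l-th intertwining equations. Then for all finite subsets A, B ⊆ ℤ with l ∉ A and l ∉ B: if ⟨e_{(A,B)}, ξ⟩ ≠ 0 and ⟨e_{(A∪{l}, B∪{l})}, ξ⟩ = 0, then card A ≡ card B (mod 2). (Unpaired basis coefficients of ξ occur only at pairs of equal parity.) -/

import Mathlib

/- The concrete quasi-free CAR model: `H = ℓ²(Finset ℤ × Finset ℤ)` with orthonormal basis
`e (A, B)`, vacuum `Ω = e (∅, ∅)`, and operators `a l`, `b l`, `G` given on the basis by the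
quasi-free formulas with symbol `λ` (diagonal, `R h_l = λ_l h_l`). -/

noncomputable section

/-- The GNS Hilbert space: `ℓ²` over pairs of finite subsets of `ℤ`. -/
abbrev CARSpace := lp (fun _ : Finset ℤ × Finset ℤ => ℂ) 2

/-- The orthonormal basis vector `e_{(A,B)}`. -/
def carE (p : Finset ℤ × Finset ℤ) : CARSpace := lp.single 2 p 1

/-- The vacuum vector `Ω = e_{(∅,∅)}`. -/
def carΩ : CARSpace := carE (∅, ∅)

/-- `n(l, X)` = number of elements of `X` strictly below `l`. -/
def nlt (l : ℤ) (X : Finset ℤ) : ℕ := (X.filter fun j => j < l).card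

/-- `a` is the family of quasi-free annihilation-type operators `a_l = π_R(a(h_l))`:
`a_l e_{(A,B)} = √(1−λ_l)·(−1)^{|B|}·(−1)^{n(l,A)}·[l ∉ A]·e_{(A∪{l},B)}
              + √(λ_l)·(−1)^{n(l,B)}·[l ∈ B]·e_{(A,B∖{l})}`. -/
def IsCAR_a (lam : ℤ → ℝ) (a : ℤ → CARSpace →L[ℂ] CARSpace) : Prop :=
  ∀ (l : ℤ) (A B : Finset ℤ),
    a l (carE (A, B)) =
      ((Real.sqrt (1 - lam l) : ℂ) * (-1) ^ B.card * (-1) ^ nlt l A *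
          (if l ∈ A then 0 else 1)) • carE (insert l A, B) +
      ((Real.sqrt (lam l) : ℂ) * (-1) ^ nlt l B *
          (if l ∈ B then 1 else 0)) • carE (A, B.erase l)

/-- `b` is the family of commutant quasi-free operators:
`b_l e_{(A,B)} = √(λ_l)·(−1)^{|B|}·(−1)^{n(l,A)}·[l ∉ A]·e_{(A∪{l},B)}
              − √(1−λ_l)·(−1)^{n(l,B)}·[l ∈ B]·e_{(A,B∖{l})}`. -/
def IsCAR_b (lam : ℤ → ℝ) (b : ℤ → CARSpace →L[ℂ] CARSpace) : Prop :=
  ∀ (l : ℤ) (A B : Finset ℤ),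
    b l (carE (A, B)) =
      ((Real.sqrt (lam l) : ℂ) * (-1) ^ B.card * (-1) ^ nlt l A *
          (if l ∈ A then 0 else 1)) • carE (insert l A, B) -
      ((Real.sqrt (1 - lam l) : ℂ) * (-1) ^ nlt l B *
          (if l ∈ B then 1 else 0)) • carE (A, B.erase l)

/-- `G = Γ⊗Γ` : `G e_{(A,B)} = (−1)^{|A|+|B|} e_{(A,B)}`. -/
def IsCAR_G (G : CARSpace →L[ℂ] CARSpace) : Prop :=
  ∀ (A B : Finset ℤ), G (carE (A, B)) = ((-1 : ℂ) ^ (A.card + B.card)) • carE (A, B)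

/-- `ξ` satisfies the `l`-th intertwining equations:
`(1−λ_l)^{−1/2}·(a_l ξ) = −λ_l^{−1/2}·G(b_l ξ)` and
`λ_l^{−1/2}·(a_l* ξ) = −(1−λ_l)^{−1/2}·b_l*(G ξ)`. -/
def IntertwinesAt (lam : ℤ → ℝ) (a b : ℤ → CARSpace →L[ℂ] CARSpace)
    (G : CARSpace →L[ℂ] CARSpace) (l : ℤ) (ξ : CARSpace) : Prop :=
  (Real.sqrt (1 - lam l) : ℂ)⁻¹ • a l ξ = -((Real.sqrt (lam l) : ℂ)⁻¹) • G (b l ξ) ∧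
  (Real.sqrt (lam l) : ℂ)⁻¹ • (star (a l)) ξ =
    -((Real.sqrt (1 - lam l) : ℂ)⁻¹) • (star (b l)) (G ξ)

local notation "⟪" x ", " y "⟫" => @inner ℂ _ _ x y

/-! The `(A ∪ {l}, B)`-coordinates of the two sides of the first intertwining equation receive
contributions only from `ξ (A, B)` (creating `l` in the first set) and from
`ξ (A ∪ {l}, B ∪ {l})` (annihilating `l` in the second set), and the latter vanishes. The
factors `√(1 - λ_l)` and `√λ_l` cancel against the normalisations, and `G` contributes
the sign `-(-1) ^ (|A| + |B|)`, which leaves `ξ (A, B) = (-1) ^ (|A| + |B|) • ξ (A, B)`. -/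

lemma carE_apply (P Q : Finset ℤ × Finset ℤ) : carE Q P = if P = Q then 1 else 0 := by
  simp only [carE, lp.single_apply, Pi.single_apply]

lemma inner_carE (P : Finset ℤ × Finset ℤ) (x : CARSpace) : ⟪carE P, x⟫ = x P := by
  simp [carE, lp.inner_single_left]

lemma hasSum_apply_carE (T : CARSpace →L[ℂ] CARSpace) (ξ : CARSpace)
    (P : Finset ℤ × Finset ℤ) : HasSum (fun Q => ξ Q * T (carE Q) P) (T ξ P) := by
  have h := (lp.hasSum_single ENNReal.ofNat_ne_top ξ).mapL ((lp.evalCLM ℂ _ 2 P).comp T)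
  have hsingle : ∀ Q, lp.single 2 Q (ξ Q) = ξ Q • carE Q := fun Q => by
    rw [carE, ← lp.single_smul, smul_eq_mul, mul_one]
  simpa [hsingle, lp.evalCLM] using h

def CreatesLeftAnnihilatesRight (l : ℤ) (c d : Finset ℤ → Finset ℤ → ℂ)
    (T : CARSpace →L[ℂ] CARSpace) : Prop :=
  ∀ A B, T (carE (A, B)) =
    (c A B * if l ∈ A then 0 else 1) • carE (insert l A, B) +
    (d A B * if l ∈ B then 1 else 0) • carE (A, B.erase l)

lemma IsCAR_a.createsLeftAnnihilatesRight {lam : ℤ → ℝ}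
    {a : ℤ → CARSpace →L[ℂ] CARSpace}
    (ha : IsCAR_a lam a) (l : ℤ) :
    CreatesLeftAnnihilatesRight l
      (fun A B => (Real.sqrt (1 - lam l) : ℂ) * (-1) ^ B.card * (-1) ^ nlt l A)
      (fun _ B => (Real.sqrt (lam l) : ℂ) * (-1) ^ nlt l B) (a l) :=
  ha l

lemma IsCAR_b.createsLeftAnnihilatesRight_comp {lam : ℤ → ℝ}
    {b : ℤ → CARSpace →L[ℂ] CARSpace} {G : CARSpace →L[ℂ] CARSpace}
    (hb : IsCAR_b lam b) (hG : IsCAR_G G) (l : ℤ) :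
    CreatesLeftAnnihilatesRight l
      (fun A B => (Real.sqrt (lam l) : ℂ) * (-1) ^ B.card * (-1) ^ nlt l A *
        (-1) ^ ((insert l A).card + B.card))
      (fun A B => -(Real.sqrt (1 - lam l) : ℂ) * (-1) ^ nlt l B *
        (-1) ^ (A.card + (B.erase l).card))
      (G ∘L b l) := by
  intro A B
  rw [ContinuousLinearMap.comp_apply, hb, map_sub, map_smul, map_smul, hG, hG, smul_smul,
    smul_smul, sub_eq_add_neg, ← neg_smul]
  ring_nf

lemma CreatesLeftAnnihilatesRight.apply_insert_left {l : ℤ}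
    {c d : Finset ℤ → Finset ℤ → ℂ}
    {T : CARSpace →L[ℂ] CARSpace} (hT : CreatesLeftAnnihilatesRight l c d T)
    {A B : Finset ℤ} (hA : l ∉ A) (hB : l ∉ B) (ξ : CARSpace) :
    T ξ (insert l A, B) =
      ξ (A, B) * c A B + ξ (insert l A, insert l B) * d (insert l A) (insert l B) := by
  have hsupp : ∀ Q ∉ ({(A, B), (insert l A, insert l B)} : Finset _),
      ξ Q * T (carE Q) (insert l A, B) = 0 := by
    rintro ⟨Q₁, Q₂⟩ hQ
    simp only [Finset.mem_insert, Finset.mem_singleton, not_or, Prod.mk.injEq] at hQ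
    simp only [hT Q₁ Q₂, lp.coeFn_add, lp.coeFn_smul, Pi.add_apply, Pi.smul_apply, carE_apply,
      smul_eq_mul, Prod.mk.injEq]
    have hcreate : ¬(l ∉ Q₁ ∧ insert l A = insert l Q₁ ∧ B = Q₂) := by
      rintro ⟨hl, hins, rfl⟩
      refine hQ.1 ⟨?_, rfl⟩
      simpa [Finset.erase_insert hA, Finset.erase_insert hl] using congrArg (·.erase l) hins.symm
    have hannihilate : ¬(l ∈ Q₂ ∧ insert l A = Q₁ ∧ B = Q₂.erase l) := by
      rintro ⟨hl, rfl, rfl⟩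
      exact hQ.2 ⟨rfl, (Finset.insert_erase hl).symm⟩
    split_ifs <;> simp_all
  have hne : ((A, B) : Finset ℤ × Finset ℤ) ≠ (insert l A, insert l B) := by
    simp [Finset.ne_insert_of_notMem _ _ hA]
  rw [(hasSum_apply_carE T ξ _).unique (hasSum_sum_of_ne_finset_zero hsupp),
    Finset.sum_pair hne]
  simp [hT A B, hT (insert l A) (insert l B), carE_apply, hA, hB]

theorem stmt12_general (lam : ℤ → ℝ) (hlam : ∀ l, 0 < lam l ∧ lam l < 1)
    (a b : ℤ → CARSpace →L[ℂ] CARSpace) (G : CARSpace →L[ℂ] CARSpace)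
    (ha : IsCAR_a lam a) (hb : IsCAR_b lam b) (hG : IsCAR_G G)
    (l : ℤ)
    (ξ : CARSpace) (hξ : IntertwinesAt lam a b G l ξ) :
    ∀ A B : Finset ℤ, l ∉ A → l ∉ B →
      ⟪carE (A, B), ξ⟫ ≠ 0 → ⟪carE (insert l A, insert l B), ξ⟫ = 0 →
      A.card % 2 = B.card % 2 := by
  intro A B hA hB hξ₀ hξ₁
  rw [inner_carE] at hξ₀ hξ₁
  have hcoord := congrArg (· (insert l A, B)) hξ.1
  simp only [lp.coeFn_smul, Pi.smul_apply, smul_eq_mul] at hcoord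
  rw [(ha.createsLeftAnnihilatesRight l).apply_insert_left hA hB,
    show G (b l ξ) = (G ∘L b l) ξ from rfl,
    (hb.createsLeftAnnihilatesRight_comp hG l).apply_insert_left hA hB, hξ₁,
    Finset.card_insert_of_notMem hA] at hcoord
  have hμ : (Real.sqrt (lam l) : ℂ) ≠ 0 := by
    exact_mod_cast (Real.sqrt_pos.mpr (hlam l).1).ne'
  have hν : (Real.sqrt (1 - lam l) : ℂ) ≠ 0 := by
    exact_mod_cast (Real.sqrt_pos.mpr (sub_pos.mpr (hlam l).2)).ne'
  have hcancel : (Real.sqrt (lam l) * Real.sqrt (1 - lam l) : ℂ) *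
      (ξ (A, B) * ((-1) ^ B.card * (-1) ^ nlt l A) * ((-1) ^ (A.card + B.card) - 1)) = 0 := by
    field_simp at hcoord
    linear_combination -hcoord
  have hparity : (-1 : ℂ) ^ (A.card + B.card) = 1 := by
    simpa [hμ, hν, hξ₀, sub_eq_zero] using hcancel
  obtain ⟨k, hk⟩ := (neg_one_pow_eq_one_iff_even (by norm_num)).mp hparity
  omega

/-- let `l ∈ ℤ` with `λ_l ≠ 1/2` and let `ξ ∈ H` satisfy the `l`-th
intertwining equations. Then for all finite `A, B ⊆ ℤ` with `l ∉ A`, `l ∉ B`: if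
`⟨e_{(A,B)}, ξ⟩ ≠ 0` and `⟨e_{(A∪{l},B∪{l})}, ξ⟩ = 0`, then `card A ≡ card B (mod 2)`. -/
theorem stmt12 (lam : ℤ → ℝ) (hlam : ∀ l, 0 < lam l ∧ lam l < 1)
    (a b : ℤ → CARSpace →L[ℂ] CARSpace) (G : CARSpace →L[ℂ] CARSpace)
    (ha : IsCAR_a lam a) (hb : IsCAR_b lam b) (hG : IsCAR_G G)
    (l : ℤ) (hl : lam l ≠ 1 / 2)
    (ξ : CARSpace) (hξ : IntertwinesAt lam a b G l ξ) :
    ∀ A B : Finset ℤ, l ∉ A → l ∉ B →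
      ⟪carE (A, B), ξ⟫ ≠ 0 → ⟪carE (insert l A, insert l B), ξ⟫ = 0 →
      A.card % 2 = B.card % 2 :=
  stmt12_general lam hlam a b G ha hb hG l ξ hξ

end
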